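/- arXiv:1903.08554 — 2 statements merged into one kernel-verified Lean document; each statement's English description precedes it below -/
import Mathlib

section
/- There exists a universal constant C > 0 such that the following holds. Let N ≥ 2, d > 0, and let X_1, …, X_N ∈ ℝ³ satisfy |X_i − X_j| ≥ d for all i ≠ j. Let x ∈ ℝ³ and let i ∈ {1, …, N} be such that |x − X_i| ≤ |x − X_j| for all j ∈ {1, …, N}. Then ∑_{j ≠ i} 1/|x − X_j|³ ≤ C (log N) / d³. -/
/-!
Order the points `X j`, `j ≠ i`, by their distance `r j` to `x`. The closed ball of radius `r j`
about `x` contains `X i` and the `k` points of rank at most `k` (the rank of `X j`); these `k + 1`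
points are `d`-separated, so the disjoint balls of radius `d / 2` around them fit into the ball of
radius `r j + d / 2 ≤ 2 r j` (since `X i` is nearest, `r j ≥ d / 2`). Comparing volumes gives
`(k + 1) d³ ≤ (4 r j)³`, and summing `64 / (d³ (k + 1))` over `k = 1, …, N - 1` gives at most
`64 log N / d³`.
-/

open Finset Metric MeasureTheory Module

theorem half_le_dist_of_dist_le {α : Type*} [PseudoMetricSpace α] {x a b : α} {d : ℝ}
    (hab : d ≤ dist a b) (hx : dist x a ≤ dist x b) : d / 2 ≤ dist x b := by
  linarith [dist_triangle_left a b x]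

theorem sum_comp_card_filter_le_le_sum_range {ι α : Type*} [DecidableEq ι] [LinearOrder α] (r : ι → α)
    {g : ℕ → ℝ} (hg : Antitone g) (s : Finset ι) :
    ∑ j ∈ s, g #{k ∈ s | r k ≤ r j} ≤ ∑ m ∈ range #s, g (m + 1) := by
  induction s using Finset.induction_on_max_value r with
  | empty => simp
  | insert a s ha hmax ih =>
    have hcount_a : #{k ∈ insert a s | r k ≤ r a} = #s + 1 := by
      rw [filter_true_of_mem fun k hk => ?_, card_insert_of_notMem ha]
      rcases mem_insert.mp hk with rfl | hk
      exacts [le_rfl, hmax k hk]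
    have hcount : ∀ j ∈ s, g #{k ∈ insert a s | r k ≤ r j} ≤ g #{k ∈ s | r k ≤ r j} :=
      fun j _ => hg (card_le_card (filter_subset_filter _ (subset_insert a s)))
    rw [sum_insert ha, card_insert_of_notMem ha, sum_range_succ, hcount_a, add_comm]
    exact add_le_add_left ((sum_le_sum hcount).trans ih) _

theorem sum_range_one_div_add_two_le_log (n : ℕ) :
    ∑ m ∈ range n, 1 / ((m : ℝ) + 2) ≤ Real.log (n + 1) := by
  have h := harmonic_le_one_add_log (n + 1)
  simp only [harmonic, sum_range_succ', Rat.cast_add, Rat.cast_sum, Rat.cast_inv,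
    Rat.cast_natCast] at h
  push_cast at h
  simp only [one_div, add_assoc, one_add_one_eq_two, inv_one] at h ⊢
  linarith

section

variable {E ι : Type*} [NormedAddCommGroup E] [NormedSpace ℝ E] [FiniteDimensional ℝ E]

theorem card_mul_pow_le_of_separated {s : Finset ι} {Y : ι → E} {d R : ℝ} {x : E} (hd : 0 < d)
    (hR : 0 ≤ R) (hsep : ∀ a ∈ s, ∀ b ∈ s, a ≠ b → d ≤ dist (Y a) (Y b))
    (hY : ∀ a ∈ s, dist (Y a) x ≤ R) :
    #s * (d / 2) ^ finrank ℝ E ≤ (R + d / 2) ^ finrank ℝ E := by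
  borelize E
  let μ : Measure E := .addHaar
  have hdisj : (s : Set ι).PairwiseDisjoint fun a => ball (Y a) (d / 2) :=
    fun a ha b hb hab => ball_disjoint_ball (by linarith [hsep a ha b hb hab])
  have hsub : (⋃ a ∈ s, ball (Y a) (d / 2)) ⊆ ball x (R + d / 2) :=
    Set.iUnion₂_subset fun a ha => ball_subset_ball' (by linarith [hY a ha])
  have hvol : #s * μ (ball 0 (d / 2)) ≤ μ (ball 0 (R + d / 2)) :=
    calc #s * μ (ball 0 (d / 2)) = ∑ a ∈ s, μ (ball (Y a) (d / 2)) := by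
          simp [Measure.addHaar_ball_center]
      _ = μ (⋃ a ∈ s, ball (Y a) (d / 2)) :=
          (measure_biUnion_finset hdisj fun _ _ => measurableSet_ball).symm
      _ ≤ μ (ball x (R + d / 2)) := measure_mono hsub
      _ = μ (ball 0 (R + d / 2)) := Measure.addHaar_ball_center μ x _
  rw [Measure.addHaar_ball_of_pos μ 0 (half_pos hd),
    Measure.addHaar_ball_of_pos μ 0 (by positivity : 0 < R + d / 2), ← mul_assoc,
    ENNReal.mul_le_mul_iff_left (measure_ball_pos μ _ one_pos).ne' measure_ball_lt_top.ne,
    ← ENNReal.ofReal_natCast, ← ENNReal.ofReal_mul (by positivity)] at hvol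
  exact (ENNReal.ofReal_le_ofReal_iff (by positivity)).mp hvol

theorem card_mul_pow_le_of_separated_of_half_le {s : Finset ι} {Y : ι → E} {d R : ℝ} {x : E}
    (hd : 0 < d) (hR : d / 2 ≤ R) (hsep : ∀ a ∈ s, ∀ b ∈ s, a ≠ b → d ≤ dist (Y a) (Y b))
    (hY : ∀ a ∈ s, dist (Y a) x ≤ R) :
    #s * d ^ finrank ℝ E ≤ (4 * R) ^ finrank ℝ E := by
  have h := card_mul_pow_le_of_separated hd (by linarith) hsep hY
  have h2 : (R + d / 2) ^ finrank ℝ E ≤ (2 * R) ^ finrank ℝ E :=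
    pow_le_pow_left₀ (by linarith) (by linarith) _
  calc (#s : ℝ) * d ^ finrank ℝ E = 2 ^ finrank ℝ E * (#s * (d / 2) ^ finrank ℝ E) := by
        rw [div_pow]; field_simp
    _ ≤ 2 ^ finrank ℝ E * (2 * R) ^ finrank ℝ E := by gcongr; exact h.trans h2
    _ = (4 * R) ^ finrank ℝ E := by rw [← mul_pow]; ring

variable [Fintype ι] [DecidableEq ι]

theorem one_div_dist_pow_le_of_separated {X : ι → E} {d : ℝ} (hd : 0 < d)
    (hX : ∀ a b, a ≠ b → d ≤ dist (X a) (X b)) (x : E) {i : ι}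
    (hi : ∀ j, dist x (X i) ≤ dist x (X j)) {j : ι} (hj : j ≠ i) :
    1 / dist x (X j) ^ finrank ℝ E ≤ 4 ^ finrank ℝ E / d ^ finrank ℝ E *
      (1 / ((#{k ∈ univ.erase i | dist x (X k) ≤ dist x (X j)} : ℝ) + 1)) := by
  set n := finrank ℝ E
  have hcard : #{k ∈ univ.erase i | dist x (X k) ≤ dist x (X j)} + 1 =
      #{k | dist x (X k) ≤ dist x (X j)} := by
    rw [filter_erase, card_erase_add_one (mem_filter.mpr ⟨mem_univ i, hi j⟩)]
  set c := #{k ∈ univ.erase i | dist x (X k) ≤ dist x (X j)}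
  have hj_far : d / 2 ≤ dist x (X j) := half_le_dist_of_dist_le (hX i j hj.symm) (hi j)
  have hpack : ((c : ℝ) + 1) * d ^ n ≤ (4 * dist x (X j)) ^ n := by
    exact_mod_cast hcard ▸ card_mul_pow_le_of_separated_of_half_le hd hj_far
      (fun a _ b _ hab => hX a b hab) fun a ha => (dist_comm _ _).trans_le (mem_filter.mp ha).2
  calc 1 / dist x (X j) ^ n = 4 ^ n / (4 * dist x (X j)) ^ n := by
        rw [mul_pow]; field_simp
    _ ≤ 4 ^ n / (((c : ℝ) + 1) * d ^ n) := by gcongr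
    _ = _ := by field_simp

theorem sum_one_div_dist_pow_le_of_separated {X : ι → E} {d : ℝ} (hd : 0 < d)
    (hX : ∀ a b, a ≠ b → d ≤ dist (X a) (X b)) (x : E) {i : ι}
    (hi : ∀ j, dist x (X i) ≤ dist x (X j)) :
    ∑ j ∈ univ.erase i, 1 / dist x (X j) ^ finrank ℝ E ≤
      4 ^ finrank ℝ E * Real.log (Fintype.card ι) / d ^ finrank ℝ E := by
  set s := univ.erase i
  have hcount := sum_comp_card_filter_le_le_sum_range (fun j => dist x (X j))
    (g := fun m => 1 / ((m : ℝ) + 1)) (fun a b hab => by dsimp only; gcongr) s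
  have hcard : (#s : ℝ) + 1 = Fintype.card ι := by
    rw [card_erase_of_mem (mem_univ i), card_univ,
      Nat.cast_sub (Fintype.card_pos_iff.mpr ⟨i⟩), Nat.cast_one, sub_add_cancel]
  calc ∑ j ∈ s, 1 / dist x (X j) ^ finrank ℝ E
      ≤ ∑ j ∈ s, 4 ^ finrank ℝ E / d ^ finrank ℝ E *
          (1 / ((#{k ∈ s | dist x (X k) ≤ dist x (X j)} : ℝ) + 1)) :=
        sum_le_sum fun j hj => one_div_dist_pow_le_of_separated hd hX x hi (ne_of_mem_erase hj)
    _ ≤ 4 ^ finrank ℝ E / d ^ finrank ℝ E * ∑ m ∈ range #s, 1 / ((m : ℝ) + 2) := by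
        rw [← mul_sum]
        gcongr
        refine hcount.trans_eq (sum_congr rfl fun m _ => ?_)
        push_cast; ring
    _ ≤ 4 ^ finrank ℝ E / d ^ finrank ℝ E * Real.log (Fintype.card ι) := by
        rw [← hcard]; gcongr; exact sum_range_one_div_add_two_le_log #s
    _ = _ := by ring

end

theorem sum_inv_dist_cube_le :
    ∃ C : ℝ, 0 < C ∧
      ∀ (N : ℕ), 2 ≤ N → ∀ (d : ℝ), 0 < d →
        ∀ X : Fin N → EuclideanSpace ℝ (Fin 3),
          (∀ i j : Fin N, i ≠ j → d ≤ ‖X i - X j‖) →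
          ∀ (x : EuclideanSpace ℝ (Fin 3)) (i : Fin N),
            (∀ j : Fin N, ‖x - X i‖ ≤ ‖x - X j‖) →
            ∑ j ∈ Finset.univ.erase i, 1 / ‖x - X j‖ ^ 3 ≤ C * Real.log N / d ^ 3 := by
  refine ⟨64, by norm_num, fun N _ d hd X hX x i hi => ?_⟩
  simp only [← dist_eq_norm] at hX hi ⊢
  have h := sum_one_div_dist_pow_le_of_separated hd hX x hi
  rwa [finrank_euclideanSpace_fin, Fintype.card_fin, show (4 : ℝ) ^ 3 = 64 by norm_num] at h
end

section
/- Let ε ∈ ℝ^{3×3} be symmetric with trace zero and let R > 0. Define d : ℝ³∖{0} → ℝ³ by d(x) = (5/2) R³ x (x · ε x)/|x|⁵ + R⁵ ( ε x/|x|⁵ − (5/2) x (x · ε x)/|x|⁷ ). Then div d = 0 on ℝ³∖{0}. -/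
open Finset

/-- The `(i,j)` entry of (the matrix of) a continuous linear map on `ℝ³`;
for `A = fderiv ℝ w x` this is the partial derivative `∂ⱼ wᵢ(x)`. -/
noncomputable def entry
    (A : EuclideanSpace ℝ (Fin 3) →L[ℝ] EuclideanSpace ℝ (Fin 3)) (i j : Fin 3) : ℝ :=
  A (EuclideanSpace.single j 1) i

/-- The quadratic form `x · ε x`. -/
noncomputable def quadForm (ε : Matrix (Fin 3) (Fin 3) ℝ)
    (x : EuclideanSpace ℝ (Fin 3)) : ℝ :=
  ∑ k : Fin 3, ∑ i : Fin 3, x k * ε k i * x i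

/-- The matrix-vector product `ε x` as an element of `ℝ³`. -/
noncomputable def matVec (ε : Matrix (Fin 3) (Fin 3) ℝ)
    (x : EuclideanSpace ℝ (Fin 3)) : EuclideanSpace ℝ (Fin 3) :=
  (WithLp.equiv 2 (Fin 3 → ℝ)).symm (fun i => ∑ j : Fin 3, ε i j * x j)

/-- The explicit exterior Stokes dipole field associated to strain `ε` and radius `R`. -/
noncomputable def dipole (ε : Matrix (Fin 3) (Fin 3) ℝ) (R : ℝ)
    (x : EuclideanSpace ℝ (Fin 3)) : EuclideanSpace ℝ (Fin 3) :=
  ((5 / 2) * R ^ 3 * quadForm ε x / ‖x‖ ^ 5) • x +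
    R ^ 5 • ((1 / ‖x‖ ^ 5) • matVec ε x - ((5 / 2) * quadForm ε x / ‖x‖ ^ 7) • x)


/-!
With `q(x) = x · ε x`, the product rule `div (φ v) = φ div v + ∇φ · v` handles both kinds of
term in `d`. The scalar `q(x) |x|^m` is homogeneous of degree `m + 2`, so by Euler's identity
`div (q |x|^m x) = (n + 2 + m) q |x|^m`, which vanishes in `ℝ³` for `m = -5` and equals
`-2 q |x|⁻⁷` for `m = -7`; and `div (|x|^m ε x) = |x|^m tr ε + m |x|^(m-2) q`, which is
`-5 q |x|⁻⁷` for `m = -5` when `tr ε = 0`. The two `R⁵` contributions therefore cancel.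
-/

open RealInnerProductSpace

section Divergence

variable {E : Type*} [NormedAddCommGroup E] [NormedSpace ℝ E] {v w : E → E} {x : E}

noncomputable def divergence (v : E → E) (x : E) : ℝ :=
  LinearMap.trace ℝ E (fderiv ℝ v x)

theorem divergence_add (hv : DifferentiableAt ℝ v x) (hw : DifferentiableAt ℝ w x) :
    divergence (fun y => v y + w y) x = divergence v x + divergence w x := by
  simp only [divergence, fderiv_fun_add hv hw, ContinuousLinearMap.toLinearMap_add, map_add]

theorem divergence_sub (hv : DifferentiableAt ℝ v x) (hw : DifferentiableAt ℝ w x) :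
    divergence (fun y => v y - w y) x = divergence v x - divergence w x := by
  simp only [divergence, fderiv_fun_sub hv hw, ContinuousLinearMap.toLinearMap_sub, map_sub]

theorem divergence_const_smul (hv : DifferentiableAt ℝ v x) (c : ℝ) :
    divergence (fun y => c • v y) x = c * divergence v x := by
  simp only [divergence, fderiv_fun_const_smul hv, ContinuousLinearMap.toLinearMap_smul, map_smul,
    smul_eq_mul]

theorem divergence_smul [FiniteDimensional ℝ E] {φ : E → ℝ} (hφ : DifferentiableAt ℝ φ x)
    (hv : DifferentiableAt ℝ v x) :
    divergence (fun y => φ y • v y) x = φ x * divergence v x + fderiv ℝ φ x (v x) := by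
  simp only [divergence, fderiv_fun_smul hφ hv, ContinuousLinearMap.toLinearMap_add,
    ContinuousLinearMap.toLinearMap_smul, ContinuousLinearMap.coe_smulRight, map_add, map_smul,
    LinearMap.trace_smulRight, smul_eq_mul, ContinuousLinearMap.coe_coe]

theorem divergence_id [FiniteDimensional ℝ E] :
    divergence (fun y : E => y) x = Module.finrank ℝ E := by
  simp only [divergence, fderiv_fun_id, ContinuousLinearMap.coe_id, LinearMap.trace_id]

theorem divergence_continuousLinearMap (T : E →L[ℝ] E) :
    divergence (fun y => T y) x = LinearMap.trace ℝ E T := by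
  simp only [divergence, ContinuousLinearMap.fderiv]

end Divergence

section InnerProductSpace

variable {E : Type*} [NormedAddCommGroup E] [InnerProductSpace ℝ E] {x : E}

theorem hasFDerivAt_norm (hx : x ≠ 0) :
    HasFDerivAt (fun y : E => ‖y‖) (‖x‖⁻¹ • innerSL ℝ x) x := by
  have hsq := ((hasStrictFDerivAt_norm_sq x).hasFDerivAt).sqrt (by positivity)
  simp only [Real.sqrt_sq (norm_nonneg _)] at hsq
  refine hsq.congr_fderiv (ContinuousLinearMap.ext fun y => ?_)
  simp only [smul_apply, two_smul, add_apply, smul_eq_mul]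
  field_simp
  ring

theorem hasFDerivAt_norm_zpow (hx : x ≠ 0) (m : ℤ) :
    HasFDerivAt (fun y : E => ‖y‖ ^ m) ((m * ‖x‖ ^ (m - 2)) • innerSL ℝ x) x := by
  have hn : ‖x‖ ≠ 0 := norm_ne_zero_iff.2 hx
  refine ((hasDerivAt_zpow m ‖x‖ (Or.inl hn)).comp_hasFDerivAt x
    (hasFDerivAt_norm hx)).congr_fderiv ?_
  rw [smul_smul, mul_assoc, ← zpow_neg_one, ← zpow_add₀ hn]
  ring_nf

theorem hasFDerivAt_inner_self_apply (T : E →L[ℝ] E) (x : E) :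
    HasFDerivAt (fun y => ⟪y, T y⟫) ((fderivInnerCLM ℝ (x, T x)).comp
      ((ContinuousLinearMap.id ℝ E).prod T)) x :=
  (hasFDerivAt_id x).inner ℝ T.hasFDerivAt

theorem divergence_inner_self_apply_mul_norm_zpow_smul [FiniteDimensional ℝ E] (T : E →L[ℝ] E)
    (hx : x ≠ 0) (m : ℤ) :
    divergence (fun y => (⟪y, T y⟫ * ‖y‖ ^ m) • y) x =
      (Module.finrank ℝ E + 2 + m) * (⟪x, T x⟫ * ‖x‖ ^ m) := by
  have hφ : HasFDerivAt (fun y => ⟪y, T y⟫ * ‖y‖ ^ m) _ x :=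
    (hasFDerivAt_inner_self_apply T x).mul (hasFDerivAt_norm_zpow hx m)
  rw [divergence_smul hφ.differentiableAt differentiableAt_fun_id, divergence_id, hφ.fderiv]
  have hn : ‖x‖ ≠ 0 := norm_ne_zero_iff.2 hx
  simp only [add_apply, smul_apply, ContinuousLinearMap.comp_apply, ContinuousLinearMap.prod_apply,
    ContinuousLinearMap.id_apply, fderivInnerCLM_apply, innerSL_apply_apply, smul_eq_mul,
    real_inner_self_eq_norm_sq, zpow_sub₀ hn, zpow_two]
  field_simp
  ring

theorem divergence_norm_zpow_smul_apply [FiniteDimensional ℝ E] (T : E →L[ℝ] E) (hx : x ≠ 0)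
    (m : ℤ) :
    divergence (fun y => ‖y‖ ^ m • T y) x =
      ‖x‖ ^ m * LinearMap.trace ℝ E T + m * ‖x‖ ^ (m - 2) * ⟪x, T x⟫ := by
  have hφ := hasFDerivAt_norm_zpow hx m
  rw [divergence_smul hφ.differentiableAt T.differentiableAt,
    divergence_continuousLinearMap, hφ.fderiv]
  simp only [smul_apply, innerSL_apply_apply, smul_eq_mul, mul_assoc]

end InnerProductSpace

theorem sum_entry_eq_trace
    (A : EuclideanSpace ℝ (Fin 3) →L[ℝ] EuclideanSpace ℝ (Fin 3)) :
    ∑ i : Fin 3, entry A i i = LinearMap.trace ℝ (EuclideanSpace ℝ (Fin 3)) A := by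
  rw [LinearMap.trace_eq_matrix_trace ℝ (EuclideanSpace.basisFun (Fin 3) ℝ).toBasis]
  simp [Matrix.trace, LinearMap.toMatrix_apply, entry]

theorem trace_toEuclideanCLM (ε : Matrix (Fin 3) (Fin 3) ℝ) :
    LinearMap.trace ℝ (EuclideanSpace ℝ (Fin 3)) (Matrix.toEuclideanCLM (𝕜 := ℝ) ε) =
      ε.trace := by
  rw [← sum_entry_eq_trace]
  simp [entry, Matrix.trace]

theorem matVec_eq_toEuclideanCLM (ε : Matrix (Fin 3) (Fin 3) ℝ) (x : EuclideanSpace ℝ (Fin 3)) :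
    matVec ε x = Matrix.toEuclideanCLM (𝕜 := ℝ) ε x := by
  ext i
  simp [matVec, Matrix.mulVec, dotProduct]

theorem quadForm_eq_inner (ε : Matrix (Fin 3) (Fin 3) ℝ) (x : EuclideanSpace ℝ (Fin 3)) :
    quadForm ε x = ⟪x, Matrix.toEuclideanCLM (𝕜 := ℝ) ε x⟫ := by
  rw [Matrix.inner_toEuclideanCLM]
  simp [quadForm, Matrix.mulVec, dotProduct, Finset.mul_sum, mul_assoc]

theorem dipole_eq (ε : Matrix (Fin 3) (Fin 3) ℝ) (R : ℝ) :
    dipole ε R = fun y =>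
      ((5 / 2) * R ^ 3) • ((⟪y, Matrix.toEuclideanCLM (𝕜 := ℝ) ε y⟫ * ‖y‖ ^ (-5 : ℤ)) • y) +
        R ^ 5 • (‖y‖ ^ (-5 : ℤ) • Matrix.toEuclideanCLM (𝕜 := ℝ) ε y -
          (5 / 2 : ℝ) • ((⟪y, Matrix.toEuclideanCLM (𝕜 := ℝ) ε y⟫ * ‖y‖ ^ (-7 : ℤ)) • y)) := by
  funext y
  simp only [dipole, matVec_eq_toEuclideanCLM, quadForm_eq_inner, smul_smul, zpow_neg,
    zpow_ofNat, div_eq_mul_inv, one_mul]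
  congr 2 <;> ring_nf

theorem dipole_div_free_general (ε : Matrix (Fin 3) (Fin 3) ℝ)
    (htr : Matrix.trace ε = 0) (R : ℝ) :
    ∀ x : EuclideanSpace ℝ (Fin 3), x ≠ 0 →
      ∑ i : Fin 3, entry (fderiv ℝ (dipole ε R) x) i i = 0 := by
  intro x hx
  set T := Matrix.toEuclideanCLM (𝕜 := ℝ) ε
  have hquad : DifferentiableAt ℝ (fun y => ⟪y, T y⟫) x :=
    (hasFDerivAt_inner_self_apply T x).differentiableAt
  have hnorm (m : ℤ) : DifferentiableAt ℝ (fun y : EuclideanSpace ℝ (Fin 3) => ‖y‖ ^ m) x :=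
    (hasFDerivAt_norm_zpow hx m).differentiableAt
  rw [sum_entry_eq_trace, ← divergence, dipole_eq, divergence_add (by fun_prop) (by fun_prop),
    divergence_const_smul (by fun_prop), divergence_const_smul (by fun_prop),
    divergence_sub (by fun_prop) (by fun_prop), divergence_const_smul (by fun_prop),
    divergence_inner_self_apply_mul_norm_zpow_smul T hx,
    divergence_inner_self_apply_mul_norm_zpow_smul T hx, divergence_norm_zpow_smul_apply T hx,
    trace_toEuclideanCLM, htr, finrank_euclideanSpace_fin]
  have hn : ‖x‖ ≠ 0 := norm_ne_zero_iff.2 hx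
  simp only [zpow_sub₀ hn]
  field_simp
  ring

theorem dipole_div_free (ε : Matrix (Fin 3) (Fin 3) ℝ)
    (hsym : ε.IsSymm) (htr : Matrix.trace ε = 0) (R : ℝ) (hR : 0 < R) :
    ∀ x : EuclideanSpace ℝ (Fin 3), x ≠ 0 →
      ∑ i : Fin 3, entry (fderiv ℝ (dipole ε R) x) i i = 0 :=
  dipole_div_free_general ε htr R
end
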